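/- Let V be a nonempty finite subset of R^n, W a nonempty finite subset of R^n \ {0}, L = conv(V) + cone(W), f ∈ int(L), and L_t = conv(V ∪ (f + tW)) for t ∈ N. Then the intersection over all t of the polar sets (L_t − f)° equals (L − f)°. -/

import Mathlib

open Pointwise

/-- The convex conic hull of a finite set `W`: all nonnegative combinations. -/
def coneHull (n : ℕ) (W : Finset (EuclideanSpace ℝ (Fin n))) :
    Set (EuclideanSpace ℝ (Fin n)) :=
  {x | ∃ c : EuclideanSpace ℝ (Fin n) → ℝ, (∀ w, 0 ≤ c w) ∧ x = ∑ w ∈ W, c w • w}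

/-- The polar of a set. -/
def polarSet {n : ℕ} (X : Set (EuclideanSpace ℝ (Fin n))) : Set (EuclideanSpace ℝ (Fin n)) :=
  {u | ∀ x ∈ X, (inner ℝ (u) (x) : ℝ) ≤ 1}

/-! Since `f ∈ L`, every `L_t` lies in `L`, so `(L - f)°` is contained in each `(L_t - f)°`.
Conversely, a `u` in every `(L_t - f)°` satisfies `⟪u, v - f⟫ ≤ 1` on `V` (take `t = 1`) and
`⟪u, w⟫ ≤ 0` on `W` (since `⟪u, t • w⟫ ≤ 1` for all `t`); these two conditions are preserved by
convex combinations of `V` and nonnegative combinations of `W`, so `u ∈ (L - f)°`. -/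

section

variable {n : ℕ}

local notation "ℝⁿ" => EuclideanSpace ℝ (Fin n)

theorem polarSet_antitone : Antitone (polarSet (n := n)) :=
  fun _ _ h _ hu x hx => hu x (h hx)

theorem mem_polarSet_image_sub_convexHull {s : Set ℝⁿ} {f u : ℝⁿ} :
    u ∈ polarSet ((· - f) '' convexHull ℝ s) ↔ ∀ x ∈ s, inner ℝ u (x - f) ≤ 1 := by
  refine ⟨fun hu x hx => hu _ ⟨x, subset_convexHull ℝ s hx, rfl⟩, ?_⟩
  rintro hs _ ⟨x, hx, rfl⟩
  have hconv : Convex ℝ {x : ℝⁿ | inner ℝ u (x - f) ≤ 1} := by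
    simp_rw [inner_sub_right, sub_le_iff_le_add]
    exact convex_halfSpace_le (innerₛₗ ℝ u).isLinear _
  exact convexHull_min hs hconv hx

theorem convex_coneHull (W : Finset ℝⁿ) : Convex ℝ (coneHull n W) := by
  rintro x ⟨c, hc, rfl⟩ y ⟨d, hd, rfl⟩ a b ha hb -
  refine ⟨fun w => a * c w + b * d w, fun w =>
    add_nonneg (mul_nonneg ha (hc w)) (mul_nonneg hb (hd w)), ?_⟩
  simp [Finset.smul_sum, smul_smul, add_smul, Finset.sum_add_distrib]

theorem zero_mem_coneHull (W : Finset ℝⁿ) : (0 : ℝⁿ) ∈ coneHull n W :=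
  ⟨fun _ => 0, fun _ => le_rfl, by simp⟩

theorem add_smul_mem_coneHull {W : Finset ℝⁿ} {c w : ℝⁿ} (hc : c ∈ coneHull n W)
    (hw : w ∈ W) {t : ℝ} (ht : 0 ≤ t) : c + t • w ∈ coneHull n W := by
  classical
  obtain ⟨d, hd, rfl⟩ := hc
  refine ⟨d + Pi.single w t, fun w' => add_nonneg (hd w') ?_, ?_⟩
  · rw [Pi.single_apply]; split_ifs <;> simp [ht]
  · simp [add_smul, Finset.sum_add_distrib, Pi.single_apply, ite_smul, hw]

theorem inner_nonpos_of_mem_coneHull {W : Finset ℝⁿ} {u c : ℝⁿ}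
    (hW : ∀ w ∈ W, inner ℝ u w ≤ 0) (hc : c ∈ coneHull n W) : inner ℝ u c ≤ 0 := by
  obtain ⟨d, hd, rfl⟩ := hc
  rw [inner_sum]
  exact Finset.sum_nonpos fun w hw => by
    rw [real_inner_smul_right]; exact mul_nonpos_of_nonneg_of_nonpos (hd w) (hW w hw)

theorem convexHull_union_image_subset {V : Set ℝⁿ} {W : Finset ℝⁿ} {f : ℝⁿ}
    (hf : f ∈ convexHull ℝ V + coneHull n W) {t : ℝ} (ht : 0 ≤ t) :
    convexHull ℝ (V ∪ (fun w => f + t • w) '' W) ⊆ convexHull ℝ V + coneHull n W := by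
  refine convexHull_min ?_ ((convex_convexHull ℝ V).add (convex_coneHull W))
  rintro _ (hv | ⟨w, hw, rfl⟩)
  · exact ⟨_, subset_convexHull ℝ V hv, 0, zero_mem_coneHull W, add_zero _⟩
  · obtain ⟨v, hv, c, hc, rfl⟩ := hf
    exact ⟨v, hv, c + t • w, add_smul_mem_coneHull hc hw ht, (add_assoc _ _ _).symm⟩

theorem nonpos_of_forall_natCast_mul_le {a : ℝ} (h : ∀ t : ℕ, 1 ≤ t → (t : ℝ) * a ≤ 1) :
    a ≤ 0 := by
  by_contra! ha
  have hle := h (⌈a⁻¹⌉₊ + 1) (by omega)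
  push_cast at hle
  nlinarith [mul_inv_cancel₀ ha.ne', Nat.le_ceil a⁻¹]

end

theorem iInter_polar_Lt_eq_general (n : ℕ) (V W : Finset (EuclideanSpace ℝ (Fin n)))
    (f : EuclideanSpace ℝ (Fin n))
    (hf : f ∈ interior (convexHull ℝ (V : Set (EuclideanSpace ℝ (Fin n))) + coneHull n W)) :
    (⋂ (t : ℕ) (_ : 1 ≤ t),
        polarSet ((· - f) '' convexHull ℝ
          ((V : Set (EuclideanSpace ℝ (Fin n))) ∪ ((fun w => f + (t : ℝ) • w) '' W)))) =
      polarSet ((· - f) ''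
        (convexHull ℝ (V : Set (EuclideanSpace ℝ (Fin n))) + coneHull n W)) := by
  ext u
  simp only [Set.mem_iInter, mem_polarSet_image_sub_convexHull]
  constructor
  · intro hu
    have hV : ∀ v ∈ convexHull ℝ (V : Set (EuclideanSpace ℝ (Fin n))), inner ℝ u (v - f) ≤ 1 :=
      fun v hv => mem_polarSet_image_sub_convexHull.2
        (fun x hx => hu 1 le_rfl x (Or.inl hx)) _ ⟨v, hv, rfl⟩
    have hW : ∀ w ∈ W, inner ℝ u w ≤ 0 := fun w hw =>
      nonpos_of_forall_natCast_mul_le fun t ht => by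
        simpa [real_inner_smul_right] using hu t ht _ (Or.inr ⟨w, hw, rfl⟩)
    rintro _ ⟨_, ⟨v, hv, c, hc, rfl⟩, rfl⟩
    change inner ℝ u (v + c - f) ≤ 1
    rw [add_sub_right_comm, inner_add_right]
    linarith [hV v hv, inner_nonpos_of_mem_coneHull hW hc]
  · intro hu t _
    rw [← mem_polarSet_image_sub_convexHull]
    exact polarSet_antitone (Set.image_mono
      (convexHull_union_image_subset (interior_subset hf) t.cast_nonneg)) hu

/-- The intersection over all `t ≥ 1` of the polars `(L_t - f)°` equals `(L - f)°`, where
`L = conv(V) + cone(W)` and `L_t = conv(V ∪ (f + tW))`. -/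
theorem iInter_polar_Lt_eq (n : ℕ) (V W : Finset (EuclideanSpace ℝ (Fin n)))
    (hV : V.Nonempty) (hW : W.Nonempty) (hW0 : (0 : EuclideanSpace ℝ (Fin n)) ∉ W)
    (f : EuclideanSpace ℝ (Fin n))
    (hf : f ∈ interior (convexHull ℝ (V : Set (EuclideanSpace ℝ (Fin n))) + coneHull n W)) :
    (⋂ (t : ℕ) (_ : 1 ≤ t),
        polarSet ((· - f) '' convexHull ℝ
          ((V : Set (EuclideanSpace ℝ (Fin n))) ∪ ((fun w => f + (t : ℝ) • w) '' W)))) =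
      polarSet ((· - f) ''
        (convexHull ℝ (V : Set (EuclideanSpace ℝ (Fin n))) + coneHull n W)) :=
  iInter_polar_Lt_eq_general n V W f hf
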